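/- arXiv:2511.15428 — 3 statements merged into one kernel-verified Lean document; each statement's English description precedes it below -/
import Mathlib

section
/- Let θ : [x0, x1] → ℝ be twice differentiable with θ ≥ 0, θ(x0) = 0, θ'(x0) = 0, and θ'' = θ² on [x0, x1]. If θ(x1) > 0, then a contradiction follows; in particular, θ ≡ 0 on [x0, x1]. -/
/-- If `θ ≥ 0` solves `θ'' = θ²` on `[x0, x1]` with `θ(x0) = 0` and
`θ'(x0) = 0`, then `θ(x1) > 0` leads to a contradiction; in particular
`θ ≡ 0` on `[x0, x1]`. -/
theorem stmt_2 (x0 x1 : ℝ) (hx : x0 ≤ x1) (θ θd θdd : ℝ → ℝ)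
    (hθd : ∀ x ∈ Set.Icc x0 x1, HasDerivAt θ (θd x) x)
    (hθdd : ∀ x ∈ Set.Icc x0 x1, HasDerivAt θd (θdd x) x)
    (hpos : ∀ x ∈ Set.Icc x0 x1, 0 ≤ θ x)
    (h0 : θ x0 = 0) (h0' : θd x0 = 0)
    (heq : ∀ x ∈ Set.Icc x0 x1, θdd x = (θ x) ^ 2) :
    (θ x1 > 0 → False) ∧ ∀ x ∈ Set.Icc x0 x1, θ x = 0 := by
  have hx0 : x0 ∈ Set.Icc x0 x1 := ⟨le_refl _, hx⟩
  -- θd is monotone on [x0,x1] since its derivative θdd = θ² ≥ 0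
  have hmono : MonotoneOn θd (Set.Icc x0 x1) := by
    apply monotoneOn_of_deriv_nonneg (convex_Icc _ _)
    · exact fun x hx' => (hθdd x hx').continuousAt.continuousWithinAt
    · intro x hx'
      have hx'' : x ∈ Set.Icc x0 x1 := interior_subset hx'
      exact ((hθdd x hx'').differentiableAt).differentiableWithinAt
    · intro x hx'
      have hx'' : x ∈ Set.Icc x0 x1 := interior_subset hx'
      rw [(hθdd x hx'').deriv, heq x hx'']
      positivity
  have hθdnn : ∀ x ∈ Set.Icc x0 x1, 0 ≤ θd x := by
    intro x hx'
    have := hmono hx0 hx' hx'.1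
    rwa [h0'] at this
  -- θ is monotone on [x0,x1]
  have hmonoθ : MonotoneOn θ (Set.Icc x0 x1) := by
    apply monotoneOn_of_deriv_nonneg (convex_Icc _ _)
    · exact fun x hx' => (hθd x hx').continuousAt.continuousWithinAt
    · intro x hx'
      exact ((hθd x (interior_subset hx')).differentiableAt).differentiableWithinAt
    · intro x hx'
      have hx'' : x ∈ Set.Icc x0 x1 := interior_subset hx'
      rw [(hθd x hx'').deriv]
      exact hθdnn x hx''
  set M : ℝ := θ x1 with hM
  have hMnn : 0 ≤ M := hpos x1 ⟨hx, le_refl _⟩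
  have hbound : ∀ x ∈ Set.Icc x0 x1, θ x ≤ M :=
    fun x hx' => hmonoθ hx' ⟨hx, le_refl _⟩ hx'.2
  -- Grönwall for u = θ + θd
  have key : ∀ x ∈ Set.Icc x0 x1, ‖θ x + θd x‖ ≤ gronwallBound 0 (M + 1) 0 (x - x0) := by
    apply norm_le_gronwallBound_of_norm_deriv_right_le
      (f' := fun x => θd x + θdd x)
    · exact fun x hx' =>
        ((hθd x hx').continuousAt.continuousWithinAt).add
          ((hθdd x hx').continuousAt.continuousWithinAt)
    · intro x hx'
      have hx'' : x ∈ Set.Icc x0 x1 := Set.Ico_subset_Icc_self hx'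
      exact ((hθd x hx'').add (hθdd x hx'')).hasDerivWithinAt
    · simp [h0, h0']
    · intro x hx'
      have hx'' : x ∈ Set.Icc x0 x1 := Set.Ico_subset_Icc_self hx'
      have h1 : 0 ≤ θ x := hpos x hx''
      have h2 : 0 ≤ θd x := hθdnn x hx''
      have h3 : θdd x = θ x ^ 2 := heq x hx''
      rw [Real.norm_eq_abs, Real.norm_eq_abs, abs_of_nonneg (by rw [h3]; positivity),
        abs_of_nonneg (by linarith), add_zero, h3]
      have h4 : θ x ^ 2 ≤ M * θ x := by
        have := hbound x hx''
        nlinarith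
      nlinarith
  have hzero : ∀ x ∈ Set.Icc x0 x1, θ x = 0 := by
    intro x hx'
    have := key x hx'
    rw [gronwallBound_ε0_δ0] at this
    have h1 : 0 ≤ θ x := hpos x hx'
    have h2 : 0 ≤ θd x := hθdnn x hx'
    have := abs_nonneg (θ x + θd x)
    rw [Real.norm_eq_abs] at *
    have : θ x + θd x = 0 := le_antisymm (by nlinarith [le_abs_self (θ x + θd x)]) (by linarith)
    linarith
  exact ⟨fun h => by have := hzero x1 ⟨hx, le_refl _⟩; linarith, hzero⟩
end

section
/- For any resource m ∈ L∞(Ω) with 0 ≤ m ≤ 1 and (1/|Ω|)∫_Ω m = m₀ ∈ (0,1), the total equilibrium population F_μ(m) = ∫_Ω θ_{m,μ} satisfies m₀|Ω| ≤ F_μ(m) ≤ 3 m₀|Ω|. -/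
/-!
Dividing the equation by `θ` and integrating, the Neumann conditions give
`∫ θ = ∫ m + μ ∫ (θ' / θ) ^ 2`, hence the lower bound. For the upper bound, the energy
`w = μ θ' ^ 2 - 2/3 θ ^ 3` satisfies `w' = -2 m θ θ'` and is negative at both ends. It stays
nonpositive: on an excursion where `w > 0` we have `θ' ≠ 0`, so `θ'` keeps its sign and `w` is
monotone towards an end of the excursion, where `w ≤ 0`. Thus `μ (θ' / θ) ^ 2 ≤ 2/3 θ`, and
`∫ θ ≤ m₀ |Ω| + 2/3 ∫ θ`.
-/

open Set MeasureTheory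

theorem IsPreconnected.forall_neg_of_ne_zero {X : Type*} [TopologicalSpace X] {s : Set X}
    {g : X → ℝ} (hs : IsPreconnected s) (hg : ContinuousOn g s) (hne : ∀ x ∈ s, g x ≠ 0)
    {x₀ : X} (hx₀ : x₀ ∈ s) (hgx₀ : g x₀ < 0) : ∀ x ∈ s, g x < 0 := by
  intro x hx
  by_contra! hgx
  obtain ⟨z, hz, hgz⟩ := hs.intermediate_value hx₀ hx hg ⟨hgx₀.le, hgx⟩
  exact hne z hz hgz

theorem ContinuousOn.exists_first_nonpos {w : ℝ → ℝ} {c d : ℝ} (hw : ContinuousOn w (Icc c d))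
    (hcd : c ≤ d) (hwd : w d ≤ 0) : ∃ β ∈ Icc c d, w β ≤ 0 ∧ ∀ x ∈ Ico c β, 0 < w x := by
  set T := Icc c d ∩ {x | w x ≤ 0}
  have hT : IsClosed T := hw.preimage_isClosed_of_isClosed isClosed_Icc isClosed_Iic
  have hTbdd : BddBelow T := ⟨c, fun x hx => hx.1.1⟩
  obtain ⟨hβ, hwβ⟩ : sInf T ∈ T := hT.csInf_mem ⟨d, ⟨hcd, le_rfl⟩, hwd⟩ hTbdd
  refine ⟨sInf T, hβ, hwβ, fun x hx => ?_⟩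
  by_contra! hwx
  exact (csInf_le hTbdd ⟨⟨hx.1, hx.2.le.trans hβ.2⟩, hwx⟩).not_gt hx.2

theorem nonpos_of_hasDerivAt_eq_neg_mul_of_neg {w g k : ℝ → ℝ} {c d : ℝ} (hcd : c ≤ d)
    (hw : ContinuousOn w (Icc c d)) (hg : ContinuousOn g (Icc c d))
    (hderiv : ∀ x ∈ Ioo c d, HasDerivAt w (-(k x * g x)) x) (hk : ∀ x ∈ Ioo c d, 0 ≤ k x)
    (hgw : ∀ x ∈ Icc c d, 0 < w x → g x ≠ 0) (hwd : w d ≤ 0) (hgc : g c < 0) : w c ≤ 0 := by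
  obtain ⟨β, ⟨hcβ, hβd⟩, hwβ, hwpos⟩ := hw.exists_first_nonpos hcd hwd
  have hsub : Ico c β ⊆ Icc c d := Ico_subset_Icc_self.trans (Icc_subset_Icc_right hβd)
  have hgneg : ∀ x ∈ Ioo c β, g x < 0 := fun x hx =>
    isPreconnected_Ico.forall_neg_of_ne_zero (hg.mono hsub)
      (fun y hy => hgw y (hsub hy) (hwpos y hy)) ⟨le_rfl, hx.1.trans hx.2⟩ hgc x
      (Ioo_subset_Ico_self hx)
  have hIoo : Ioo c β ⊆ Ioo c d := Ioo_subset_Ioo_right hβd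
  have hmono : MonotoneOn w (Icc c β) := by
    refine monotoneOn_of_hasDerivWithinAt_nonneg (convex_Icc c β)
      (hw.mono (Icc_subset_Icc_right hβd)) (f' := fun x => -(k x * g x)) ?_ ?_
    · rw [interior_Icc]
      exact fun x hx => (hderiv x (hIoo hx)).hasDerivWithinAt
    · rw [interior_Icc]
      exact fun x hx => neg_nonneg.mpr (mul_nonpos_of_nonneg_of_nonpos (hk x (hIoo hx))
        (hgneg x hx).le)
  exact (hmono ⟨le_rfl, hcβ⟩ ⟨hcβ, le_rfl⟩ hcβ).trans hwβ

theorem nonpos_on_Icc_of_hasDerivAt_eq_neg_mul {w g k : ℝ → ℝ} {a b : ℝ}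
    (hw : ContinuousOn w (Icc a b)) (hg : ContinuousOn g (Icc a b))
    (hderiv : ∀ x ∈ Ioo a b, HasDerivAt w (-(k x * g x)) x) (hk : ∀ x ∈ Ioo a b, 0 ≤ k x)
    (hgw : ∀ x ∈ Icc a b, 0 < w x → g x ≠ 0) (hwa : w a ≤ 0) (hwb : w b ≤ 0) :
    ∀ x ∈ Icc a b, w x ≤ 0 := by
  intro x hx
  by_contra! hwx
  rcases (hgw x hx hwx).lt_or_gt with hgx | hgx
  · have hsub : Icc x b ⊆ Icc a b := Icc_subset_Icc_left hx.1
    exact hwx.not_ge <| nonpos_of_hasDerivAt_eq_neg_mul_of_neg hx.2 (hw.mono hsub)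
      (hg.mono hsub) (fun y hy => hderiv y ⟨hx.1.trans_lt hy.1, hy.2⟩)
      (fun y hy => hk y ⟨hx.1.trans_lt hy.1, hy.2⟩) (fun y hy => hgw y (hsub hy)) hwb hgx
  · have hmaps : MapsTo Neg.neg (Icc (-x) (-a)) (Icc a x) := fun y hy =>
      ⟨le_neg.mp hy.2, neg_le.mp hy.1⟩
    have hsub : Icc a x ⊆ Icc a b := Icc_subset_Icc_right hx.2
    have hIoo : ∀ y ∈ Ioo (-x) (-a), -y ∈ Ioo a b := fun y hy =>
      ⟨lt_neg.mp hy.2, (neg_lt.mp hy.1).trans_le hx.2⟩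
    have hreflected := nonpos_of_hasDerivAt_eq_neg_mul_of_neg (w := fun y => w (-y))
      (g := fun y => -g (-y)) (k := fun y => k (-y)) (neg_le_neg hx.1)
      ((hw.mono hsub).comp continuousOn_neg hmaps)
      ((hg.mono hsub).neg.comp continuousOn_neg hmaps)
      (fun y hy => ((hderiv (-y) (hIoo y hy)).comp y (hasDerivAt_neg y)).congr_deriv (by ring))
      (fun y hy => hk (-y) (hIoo y hy))
      (fun y hy hwy => neg_ne_zero.mpr (hgw (-y) (hsub (hmaps hy)) hwy))
      (by simpa using hwa) (by simpa using hgx)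
    exact hwx.not_ge (by simpa using hreflected)

section Logistic

variable {a b μ : ℝ} {m θ θd θdd : ℝ → ℝ}

theorem hasDerivAt_mul_div_of_logistic {x mx θddx : ℝ} (hθ : HasDerivAt θ (θd x) x)
    (hθd : HasDerivAt θd θddx x) (hθx : θ x ≠ 0) (heq : μ * θddx + θ x * (mx - θ x) = 0) :
    HasDerivAt (fun y => μ * θd y / θ y) (θ x - mx - μ * θd x ^ 2 / θ x ^ 2) x := by
  refine ((hθd.const_mul μ).div hθ hθx).congr_deriv ?_
  field_simp
  linear_combination θ x * heq

theorem hasDerivAt_logistic_energy {x mx θddx : ℝ} (hθ : HasDerivAt θ (θd x) x)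
    (hθd : HasDerivAt θd θddx x) (heq : μ * θddx + θ x * (mx - θ x) = 0) :
    HasDerivAt (fun y => μ * θd y ^ 2 - 2 / 3 * θ y ^ 3) (-(2 * mx * θ x * θd x)) x := by
  refine (((hθd.pow 2).const_mul μ).sub ((hθ.pow 3).const_mul (2 / 3))).congr_deriv ?_
  push_cast
  linear_combination 2 * θd x * heq

theorem intervalIntegrable_mul_sq_div (hab : a ≤ b) (hθ : ∀ x ∈ Icc a b, HasDerivAt θ (θd x) x)
    (hθd : ∀ x ∈ Icc a b, HasDerivAt θd (θdd x) x) (hpos : ∀ x ∈ Icc a b, 0 < θ x) :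
    IntervalIntegrable (fun x => μ * θd x ^ 2 / θ x ^ 2) volume a b := by
  have hθc : ContinuousOn θ (Icc a b) :=
    continuousOn_of_forall_continuousAt fun x hx => (hθ x hx).continuousAt
  have hθdc : ContinuousOn θd (Icc a b) :=
    continuousOn_of_forall_continuousAt fun x hx => (hθd x hx).continuousAt
  exact ((continuousOn_const.mul (hθdc.pow 2)).div (hθc.pow 2)
    fun x hx => pow_ne_zero 2 (hpos x hx).ne').intervalIntegrable_of_Icc hab

variable (hθ : ∀ x ∈ Icc a b, HasDerivAt θ (θd x) x)
  (hθd : ∀ x ∈ Icc a b, HasDerivAt θd (θdd x) x)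
  (heq : ∀ x ∈ Ioo a b, μ * θdd x + θ x * (m x - θ x) = 0)
  (hpos : ∀ x ∈ Icc a b, 0 < θ x)
include hθ hθd heq hpos

theorem integral_eq_integral_add_integral_of_logistic (hab : a ≤ b)
    (hm : IntervalIntegrable m volume a b) (ha : θd a = 0) (hb : θd b = 0) :
    ∫ x in a..b, θ x = (∫ x in a..b, m x) + ∫ x in a..b, μ * θd x ^ 2 / θ x ^ 2 := by
  have hθc : ContinuousOn θ (Icc a b) :=
    continuousOn_of_forall_continuousAt fun x hx => (hθ x hx).continuousAt
  have hθdc : ContinuousOn θd (Icc a b) :=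
    continuousOn_of_forall_continuousAt fun x hx => (hθd x hx).continuousAt
  have hθne : ∀ x ∈ Icc a b, θ x ≠ 0 := fun x hx => (hpos x hx).ne'
  have hθi : IntervalIntegrable θ volume a b := hθc.intervalIntegrable_of_Icc hab
  have hqi := intervalIntegrable_mul_sq_div (μ := μ) hab hθ hθd hpos
  have hftc : ∫ x in a..b, (θ x - m x - μ * θd x ^ 2 / θ x ^ 2)
      = μ * θd b / θ b - μ * θd a / θ a :=
    intervalIntegral.integral_eq_sub_of_hasDerivAt_of_le hab
    ((continuousOn_const.mul hθdc).div hθc hθne)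
    (fun x hx => hasDerivAt_mul_div_of_logistic (hθ x (Ioo_subset_Icc_self hx))
      (hθd x (Ioo_subset_Icc_self hx)) (hθne x (Ioo_subset_Icc_self hx)) (heq x hx))
    ((hθi.sub hm).sub hqi)
  rw [intervalIntegral.integral_sub (hθi.sub hm) hqi, intervalIntegral.integral_sub hθi hm,
    ha, hb, mul_zero, zero_div, zero_div, sub_zero] at hftc
  linarith

theorem logistic_energy_nonpos (hab : a ≤ b) (hm : ∀ x ∈ Ioo a b, 0 ≤ m x) (ha : θd a = 0)
    (hb : θd b = 0) :
    ∀ x ∈ Icc a b, μ * θd x ^ 2 - 2 / 3 * θ x ^ 3 ≤ 0 := by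
  have hθc : ContinuousOn θ (Icc a b) :=
    continuousOn_of_forall_continuousAt fun x hx => (hθ x hx).continuousAt
  have hθdc : ContinuousOn θd (Icc a b) :=
    continuousOn_of_forall_continuousAt fun x hx => (hθd x hx).continuousAt
  have hend : ∀ x ∈ Icc a b, θd x = 0 → μ * θd x ^ 2 - 2 / 3 * θ x ^ 3 ≤ 0 := fun x hx h0 => by
    rw [h0]
    nlinarith [pow_pos (hpos x hx) 3]
  refine nonpos_on_Icc_of_hasDerivAt_eq_neg_mul (g := θd) (k := fun x => 2 * m x * θ x)
    ((continuousOn_const.mul (hθdc.pow 2)).sub (continuousOn_const.mul (hθc.pow 3))) hθdc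
    (fun x hx => ?_) (fun x hx => ?_) (fun x hx hw h0 => (hend x hx h0).not_gt hw) ?_ ?_
  · exact hasDerivAt_logistic_energy (hθ x (Ioo_subset_Icc_self hx))
      (hθd x (Ioo_subset_Icc_self hx)) (heq x hx)
  · exact mul_nonneg (mul_nonneg zero_le_two (hm x hx)) (hpos x (Ioo_subset_Icc_self hx)).le
  · exact hend a (left_mem_Icc.mpr hab) ha
  · exact hend b (right_mem_Icc.mpr hab) hb

theorem integral_mul_sq_div_le_of_logistic (hab : a ≤ b) (hm : ∀ x ∈ Ioo a b, 0 ≤ m x)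
    (ha : θd a = 0) (hb : θd b = 0) :
    ∫ x in a..b, μ * θd x ^ 2 / θ x ^ 2 ≤ 2 / 3 * ∫ x in a..b, θ x := by
  have hθi : IntervalIntegrable θ volume a b :=
    (continuousOn_of_forall_continuousAt fun x hx =>
      (hθ x hx).continuousAt).intervalIntegrable_of_Icc hab
  rw [← intervalIntegral.integral_const_mul]
  refine intervalIntegral.integral_mono_on hab (intervalIntegrable_mul_sq_div hab hθ hθd hpos)
    (hθi.const_mul _) fun x hx => ?_
  have hθx := hpos x hx
  have hE := logistic_energy_nonpos hθ hθd heq hpos hab hm ha hb x hx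
  rw [div_le_iff₀ (by positivity)]
  nlinarith

end Logistic

/-- Bounds of Bai–He–Li: for any resource `m` with `0 ≤ m ≤ 1` and mean
value `m₀ ∈ (0,1)`, the total equilibrium population satisfies
`m₀|Ω| ≤ ∫ θ ≤ 3 m₀|Ω|`, where `Ω = (a, b)`. -/
theorem stmt_5 (a b : ℝ) (hab : a < b) (μ m₀ : ℝ) (hμ : 0 < μ)
    (hm₀ : m₀ ∈ Set.Ioo (0 : ℝ) 1)
    (m : ℝ → ℝ) (hm : ∀ x ∈ Set.Ioo a b, 0 ≤ m x ∧ m x ≤ 1)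
    (hmean : ∫ x in a..b, m x = m₀ * (b - a))
    (θ θd θdd : ℝ → ℝ)
    (hθd : ∀ x ∈ Set.Icc a b, HasDerivAt θ (θd x) x)
    (hθdd : ∀ x ∈ Set.Icc a b, HasDerivAt θd (θdd x) x)
    (heq : ∀ x ∈ Set.Ioo a b, μ * θdd x + θ x * (m x - θ x) = 0)
    (hNa : θd a = 0) (hNb : θd b = 0)
    (hpos : ∀ x ∈ Set.Icc a b, 0 < θ x) :
    m₀ * (b - a) ≤ (∫ x in a..b, θ x) ∧ (∫ x in a..b, θ x) ≤ 3 * m₀ * (b - a) := by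
  have hmi : IntervalIntegrable m volume a b := by
    -- otherwise the integral in `hmean` would be the junk value `0`
    by_contra h
    rw [intervalIntegral.integral_undef h] at hmean
    nlinarith [hm₀.1]
  have hbalance :=
    integral_eq_integral_add_integral_of_logistic hθd hθdd heq hpos hab.le hmi hNa hNb
  have hupper := integral_mul_sq_div_le_of_logistic hθd hθdd heq hpos hab.le
    (fun x hx => (hm x hx).1) hNa hNb
  have hlower : 0 ≤ ∫ x in a..b, μ * θd x ^ 2 / θ x ^ 2 :=
    intervalIntegral.integral_nonneg hab.le fun x _ => by positivity
  rw [hmean] at hbalance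
  constructor <;> linarith
end

section
/- Define γ : ℕ → ℝ by γ(1) = γ₁ > 0 and γ(k+1) = 144 γ(k) + 50 Σ_{l=1}^{k-1} γ(l) γ(k-l). Then there exists a constant C such that γ(k) ≤ C · 200^k · k^{-3/2} · max(γ₁,1)^k for all k ≥ 1, and consequently the series Σ_k γ(k) x^k converges absolutely for |x| < 1/(200·max(γ₁,1)). -/
noncomputable def sfun (k : ℕ) : ℝ := 1 / ((k : ℝ) * Real.sqrt k)

lemma sfun_pos {k : ℕ} (hk : 1 ≤ k) : 0 < sfun k := by
  have : (0:ℝ) < k := by exact_mod_cast hk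
  unfold sfun; positivity

lemma sfun_le_one {k : ℕ} (hk : 1 ≤ k) : sfun k ≤ 1 := by
  have h1 : (1:ℝ) ≤ k := by exact_mod_cast hk
  have h2 : (1:ℝ) ≤ Real.sqrt k := by
    rw [show (1:ℝ) = Real.sqrt 1 from (Real.sqrt_one).symm]
    exact Real.sqrt_le_sqrt h1
  have : (1:ℝ) ≤ (k:ℝ) * Real.sqrt k := by nlinarith
  unfold sfun
  rw [div_le_one (by linarith)]
  exact this

lemma sum_sfun_le (n : ℕ) : ∑ l ∈ Finset.Icc 1 n, sfun l ≤ 3 - 2 / Real.sqrt n := by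
  induction n with
  | zero => simp
  | succ m ih =>
    rcases Nat.eq_zero_or_pos m with hm | hm
    · subst hm
      norm_num [sfun]
    · rw [Finset.sum_Icc_succ_top (by omega)]
      have key : sfun (m+1) ≤ 2 / Real.sqrt m - 2 / Real.sqrt (m+1) := by
        set a := Real.sqrt m with ha
        set b := Real.sqrt (m+1) with hb
        have ha2 : a^2 = m := Real.sq_sqrt (by positivity)
        have hb2 : b^2 = (m:ℝ)+1 := by
          rw [hb]; push_cast; rw [Real.sq_sqrt (by positivity)]
        have ham : (1:ℝ) ≤ m := by exact_mod_cast hm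
        have hap : 1 ≤ a := by nlinarith [Real.sqrt_nonneg (m:ℝ)]
        have hbp : 0 < b := by nlinarith [Real.sqrt_nonneg ((m:ℝ)+1)]
        have hab : a ≤ b := by nlinarith
        have hs : sfun (m+1) = 1 / (b^2 * b) := by
          unfold sfun; rw [hb2, hb]; push_cast; ring_nf
        rw [hs, div_sub_div _ _ (by positivity) (by positivity)]
        rw [div_le_div_iff₀ (by positivity) (by positivity)]
        nlinarith [mul_pos hbp hbp, sq_nonneg (a-b), sq_nonneg (a+b)]
      rw [show ((m+1:ℕ):ℝ) = (m:ℝ)+1 by push_cast; ring]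
      linarith [key, ih]





lemma sfun_double {a b : ℕ} (ha : 1 ≤ a) (hab : a ≤ b) :
    sfun b ≤ 2 * Real.sqrt 2 * sfun (a+b) := by
  have hb : 1 ≤ b := le_trans ha hab
  have hbR : (1:ℝ) ≤ b := by exact_mod_cast hb
  have habR : (a:ℝ) ≤ b := by exact_mod_cast hab
  have haR : (1:ℝ) ≤ a := by exact_mod_cast ha
  have hsb : (1:ℝ) ≤ Real.sqrt b := by
    rw [show (1:ℝ) = Real.sqrt 1 from (Real.sqrt_one).symm]
    exact Real.sqrt_le_sqrt hbR
  have key : ((a:ℝ)+b) * Real.sqrt ((a:ℝ)+b) ≤ 2 * Real.sqrt 2 * ((b:ℝ) * Real.sqrt b) := by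
    have h1 : ((a:ℝ)+b) ≤ 2*b := by linarith
    have h2 : Real.sqrt ((a:ℝ)+b) ≤ Real.sqrt 2 * Real.sqrt b := by
      rw [← Real.sqrt_mul (by norm_num)]
      exact Real.sqrt_le_sqrt (by linarith)
    have h3 : 0 ≤ Real.sqrt ((a:ℝ)+b) := Real.sqrt_nonneg _
    have h4 : (0:ℝ) ≤ 2*b := by linarith
    calc ((a:ℝ)+b) * Real.sqrt ((a:ℝ)+b) ≤ (2*b) * (Real.sqrt 2 * Real.sqrt b) := by
          exact mul_le_mul h1 h2 h3 h4
      _ = 2 * Real.sqrt 2 * ((b:ℝ) * Real.sqrt b) := by ring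
  unfold sfun
  rw [mul_one_div, div_le_div_iff₀ (by positivity) (by positivity)]
  push_cast
  nlinarith [key]

lemma sfun_conv {a b : ℕ} (ha : 1 ≤ a) (hb : 1 ≤ b) :
    sfun a * sfun b ≤ 2 * Real.sqrt 2 * sfun (a+b) * (sfun a + sfun b) := by
  have hsa := sfun_pos ha
  have hsb := sfun_pos hb
  rcases le_total a b with h | h
  · have hd := sfun_double ha h
    calc sfun a * sfun b ≤ sfun a * (2 * Real.sqrt 2 * sfun (a+b)) :=
          mul_le_mul_of_nonneg_left hd (le_of_lt hsa)
      _ ≤ 2 * Real.sqrt 2 * sfun (a+b) * (sfun a + sfun b) := by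
          have hsab := sfun_pos (k := a+b) (by omega)
          nlinarith [Real.sqrt_nonneg 2, Real.sq_sqrt (by norm_num : (0:ℝ) ≤ 2)]
  · have hd := sfun_double hb (by omega : b ≤ a)
    rw [show b + a = a + b by omega] at hd
    calc sfun a * sfun b ≤ (2 * Real.sqrt 2 * sfun (a+b)) * sfun b := by
          exact mul_le_mul_of_nonneg_right hd (le_of_lt hsb)
      _ ≤ 2 * Real.sqrt 2 * sfun (a+b) * (sfun a + sfun b) := by
          have hsab := sfun_pos (k := a+b) (by omega)
          nlinarith [Real.sqrt_nonneg 2, Real.sq_sqrt (by norm_num : (0:ℝ) ≤ 2)]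

lemma conv_sum {m : ℕ} (hm : 2 ≤ m) :
    ∑ l ∈ Finset.Icc 1 (m-1), sfun l * sfun (m-l) ≤ 17 * sfun m := by
  have hsm := sfun_pos (k := m) (by omega)
  have step1 : ∑ l ∈ Finset.Icc 1 (m-1), sfun l * sfun (m-l)
      ≤ ∑ l ∈ Finset.Icc 1 (m-1), 2 * Real.sqrt 2 * sfun m * (sfun l + sfun (m-l)) := by
    apply Finset.sum_le_sum
    intro l hl
    rw [Finset.mem_Icc] at hl
    have h1 : 1 ≤ l := hl.1
    have h2 : 1 ≤ m - l := by omega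
    have h3 : l + (m - l) = m := by omega
    have := sfun_conv h1 h2
    rw [h3] at this
    exact this
  have reflect : ∑ l ∈ Finset.Icc 1 (m-1), sfun (m-l) = ∑ l ∈ Finset.Icc 1 (m-1), sfun l := by
    apply Finset.sum_nbij' (fun l => m - l) (fun l => m - l) <;>
      (intro l hl; simp only [Finset.mem_Icc] at hl) <;>
      first | (simp only [Finset.mem_Icc]; omega) | omega | rfl
  have sums : ∑ l ∈ Finset.Icc 1 (m-1), (sfun l + sfun (m-l)) ≤ 6 := by
    rw [Finset.sum_add_distrib, reflect]
    have h3 := sum_sfun_le (m-1)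
    have : 0 ≤ 2 / Real.sqrt ((m:ℝ)-1) := by positivity
    have hc : ((m-1:ℕ):ℝ) = (m:ℝ)-1 := by
      have : 1 ≤ m := by omega
      push_cast [this]; ring
    rw [hc] at h3
    linarith
  have step2 : ∑ l ∈ Finset.Icc 1 (m-1), 2 * Real.sqrt 2 * sfun m * (sfun l + sfun (m-l))
      = 2 * Real.sqrt 2 * sfun m * ∑ l ∈ Finset.Icc 1 (m-1), (sfun l + sfun (m-l)) := by
    rw [Finset.mul_sum]
  have hsqrt2 : Real.sqrt 2 ≤ 1.415 := by
    rw [show (1.415:ℝ) = Real.sqrt (1.415^2) by rw [Real.sqrt_sq (by norm_num)]]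
    exact Real.sqrt_le_sqrt (by norm_num)
  have hsqrt2' : (0:ℝ) ≤ Real.sqrt 2 := Real.sqrt_nonneg 2
  calc ∑ l ∈ Finset.Icc 1 (m-1), sfun l * sfun (m-l)
      ≤ 2 * Real.sqrt 2 * sfun m * ∑ l ∈ Finset.Icc 1 (m-1), (sfun l + sfun (m-l)) := by
        rw [← step2]; exact step1
    _ ≤ 2 * Real.sqrt 2 * sfun m * 6 := by
        apply mul_le_mul_of_nonneg_left sums (by positivity)
    _ ≤ 17 * sfun m := by nlinarith



lemma sfun_step {m : ℕ} (hm : 7 ≤ m) : 161 * sfun m ≤ 200 * sfun (m+1) := by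
  set a := Real.sqrt m with ha
  set b := Real.sqrt (m+1) with hb
  have hmR : (7:ℝ) ≤ m := by exact_mod_cast hm
  have ha2 : a^2 = m := Real.sq_sqrt (by positivity)
  have hb2 : b^2 = (m:ℝ)+1 := by
    rw [hb]; push_cast; rw [Real.sq_sqrt (by positivity)]
  have hap : 1 ≤ a := by nlinarith [Real.sqrt_nonneg (m:ℝ)]
  have hbp : 0 < b := by nlinarith [Real.sqrt_nonneg ((m:ℝ)+1)]
  have hb6 : b^6 = ((m:ℝ)+1)^3 := by rw [show b^6 = (b^2)^3 by ring, hb2]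
  have ha6 : a^6 = ((m:ℝ))^3 := by rw [show a^6 = (a^2)^3 by ring, ha2]
  have h77 : (0:ℝ) ≤ (m:ℝ) - 7 := by linarith
  have h6 : 25921 * b^6 ≤ 40000 * a^6 := by
    rw [hb6, ha6]
    nlinarith [mul_nonneg (mul_nonneg h77 h77) h77, mul_nonneg h77 h77,
      mul_nonneg (mul_nonneg h77 h77) (by linarith : (0:ℝ) ≤ (m:ℝ))]
  have hcube : 161 * b^3 ≤ 200 * a^3 := by
    nlinarith [h6, pow_pos hbp 3, pow_pos (lt_of_lt_of_le one_pos hap) 3,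
      mul_pos (pow_pos hbp 3) (pow_pos (lt_of_lt_of_le one_pos hap) 3)]
  unfold sfun
  rw [mul_one_div, mul_one_div, div_le_div_iff₀ (by positivity) (by positivity)]
  push_cast
  nlinarith [hcube]

lemma rpow_eq_sfun {k : ℕ} (hk : 1 ≤ k) : (k : ℝ) ^ (-(3 / 2) : ℝ) = sfun k := by
  have hkp : (0:ℝ) < k := by exact_mod_cast hk
  rw [Real.rpow_neg (le_of_lt hkp), show ((3:ℝ)/2) = 1 + 1/2 by norm_num,
    Real.rpow_add hkp, Real.rpow_one, ← Real.sqrt_eq_rpow]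
  unfold sfun
  rw [one_div]




lemma sqrt_le_of_sq {x y : ℝ} (hy : 0 ≤ y) (h : x ≤ y^2) : Real.sqrt x ≤ y := by
  rw [← Real.sqrt_sq hy]; exact Real.sqrt_le_sqrt h

lemma base_num {k : ℕ} {u d : ℝ} (hk : 1 ≤ k) (hu : Real.sqrt k ≤ u) (hd : 0 ≤ d)
    (h : 50 * d * k * u ≤ 200^k) : d ≤ (1/50) * 200^k * sfun k := by
  have hkR : (1:ℝ) ≤ k := by exact_mod_cast hk
  have hsk : 0 < Real.sqrt k := Real.sqrt_pos.2 (by linarith)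
  rw [show (1/50) * (200:ℝ)^k * sfun k = 200^k / (50 * ((k:ℝ) * Real.sqrt k)) by
    unfold sfun; ring, le_div_iff₀ (by positivity)]
  have h2 : 50 * d * (k:ℝ) * Real.sqrt k ≤ 50 * d * (k:ℝ) * u :=
    mul_le_mul_of_nonneg_left hu (by positivity)
  nlinarith [h2, h]

/-- The Catalan-type sequence `γ(1) = γ₁ > 0`,
`γ(k+1) = 144 γ(k) + 50 Σ_{l=1}^{k-1} γ(l) γ(k-l)` satisfies
`γ(k) ≤ C · 200^k · k^{-3/2} · max(γ₁,1)^k`, so `Σ γ(k) x^k` converges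
absolutely for `|x| < 1/(200 · max(γ₁,1))`. -/
theorem stmt_9 (γ₁ : ℝ) (hγ₁ : 0 < γ₁) (γ : ℕ → ℝ) (h1 : γ 1 = γ₁)
    (hrec : ∀ k : ℕ, 1 ≤ k →
      γ (k + 1) = 144 * γ k + 50 * ∑ l ∈ Finset.Icc 1 (k - 1), γ l * γ (k - l)) :
    (∃ C > (0 : ℝ), ∀ k : ℕ, 1 ≤ k →
      γ k ≤ C * 200 ^ k * (k : ℝ) ^ (-(3 / 2) : ℝ) * (max γ₁ 1) ^ k) ∧
    ∀ x : ℝ, |x| < 1 / (200 * max γ₁ 1) →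
      Summable (fun k : ℕ => |γ k * x ^ k|) := by
  set M : ℝ := max γ₁ 1 with hM
  have hM1 : (1:ℝ) ≤ M := le_max_right _ _
  have hγM : γ₁ ≤ M := le_max_left _ _
  have hMpos : (0:ℝ) < M := lt_of_lt_of_le one_pos hM1
  -- positivity of γ
  have hpos : ∀ k, 1 ≤ k → 0 < γ k := by
    intro k
    induction k using Nat.strong_induction_on with
    | _ k ih =>
      intro hk
      match k, hk with
      | 1, _ => rw [h1]; exact hγ₁
      | (m+2), _ =>
        rw [hrec (m+1) (by omega)]
        have hγm := ih (m+1) (by omega) (by omega)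
        have hsum : 0 ≤ ∑ l ∈ Finset.Icc 1 (m+1-1), γ l * γ (m+1-l) := by
          apply Finset.sum_nonneg
          intro l hl
          rw [Finset.mem_Icc] at hl
          have h1' := ih l (by omega) (by omega)
          have h2' := ih (m+1-l) (by omega) (by omega)
          positivity
        linarith
  -- explicit small values
  have hγ2 : γ 2 = 144 * γ 1 := by
    have := hrec 1 le_rfl
    norm_num at this
    linarith [this]
  have hγ3 : γ 3 = 144 * γ 2 + 50 * (γ 1 * γ 1) := by
    have := hrec 2 (by norm_num)
    norm_num at this
    linarith [this]
  have hγ4 : γ 4 = 144 * γ 3 + 50 * (γ 1 * γ 2 + γ 2 * γ 1) := by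
    have := hrec 3 (by norm_num)
    rw [show Finset.Icc 1 2 = {1,2} from by decide] at this
    norm_num [Finset.sum_insert, Finset.mem_insert] at this
    linarith [this]
  have hγ5 : γ 5 = 144 * γ 4 + 50 * (γ 1 * γ 3 + γ 2 * γ 2 + γ 3 * γ 1) := by
    have := hrec 4 (by norm_num)
    rw [show Finset.Icc 1 3 = {1,2,3} from by decide] at this
    norm_num [Finset.sum_insert, Finset.mem_insert] at this
    linarith [this]
  have hγ6 : γ 6 = 144 * γ 5 + 50 * (γ 1 * γ 4 + γ 2 * γ 3 + γ 3 * γ 2 + γ 4 * γ 1) := by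
    have := hrec 5 (by norm_num)
    rw [show Finset.Icc 1 4 = {1,2,3,4} from by decide] at this
    norm_num [Finset.sum_insert, Finset.mem_insert] at this
    linarith [this]
  have hγ7 : γ 7 = 144 * γ 6 + 50 * (γ 1 * γ 5 + γ 2 * γ 4 + γ 3 * γ 3 + γ 4 * γ 2 + γ 5 * γ 1) := by
    have := hrec 6 (by norm_num)
    rw [show Finset.Icc 1 5 = {1,2,3,4,5} from by decide] at this
    norm_num [Finset.sum_insert, Finset.mem_insert] at this
    linarith [this]
  -- polynomial bounds γ k ≤ d_k M^k
  have hp1 := (hpos 1 le_rfl).le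
  have hp2 := (hpos 2 (by norm_num)).le
  have hp3 := (hpos 3 (by norm_num)).le
  have hp4 := (hpos 4 (by norm_num)).le
  have hp5 := (hpos 5 (by norm_num)).le
  have hp6 := (hpos 6 (by norm_num)).le
  have hMp : ∀ i j : ℕ, i ≤ j → M^i ≤ M^j := fun i j hij => pow_le_pow_right₀ hM1 hij
  have hb1 : γ 1 ≤ 1 * M^1 := by rw [h1, pow_one]; linarith
  have hb2 : γ 2 ≤ 144 * M^2 := by
    have h12 := hMp 1 2 (by norm_num)
    rw [hγ2, h1, pow_one] at *
    linarith [h12]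
  have hb3 : γ 3 ≤ 20786 * M^3 := by
    have q11 : γ 1 * γ 1 ≤ 1 * M^2 := by
      calc γ 1 * γ 1 ≤ (1*M^1) * (1*M^1) := mul_le_mul hb1 hb1 hp1 (by positivity)
        _ = 1 * M^2 := by ring
    have hmm := hMp 2 3 (by norm_num)
    have h144 : 144 * γ 2 ≤ 144 * (144 * M^2) := by linarith [hb2]
    rw [hγ3]
    linarith [h144, hmm, q11]
  have hb4 : γ 4 ≤ 3007584 * M^4 := by
    have q12 : γ 1 * γ 2 ≤ 144 * M^3 := by
      calc γ 1 * γ 2 ≤ (1*M^1) * (144*M^2) := mul_le_mul hb1 hb2 hp2 (by positivity)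
        _ = 144 * M^3 := by ring
    have q21 : γ 2 * γ 1 ≤ 144 * M^3 := by
      calc γ 2 * γ 1 ≤ (144*M^2) * (1*M^1) := mul_le_mul hb2 hb1 hp1 (by positivity)
        _ = 144 * M^3 := by ring
    have hmm := hMp 3 4 (by norm_num)
    have h144 : 144 * γ 3 ≤ 144 * (20786 * M^3) := by linarith [hb3]
    rw [hγ4]
    linarith [h144, hmm, q12, q21]
  have hb5 : γ 5 ≤ 436207496 * M^5 := by
    have q13 : γ 1 * γ 3 ≤ 20786 * M^4 := by
      calc γ 1 * γ 3 ≤ (1*M^1) * (20786*M^3) := mul_le_mul hb1 hb3 hp3 (by positivity)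
        _ = 20786 * M^4 := by ring
    have q22 : γ 2 * γ 2 ≤ 20736 * M^4 := by
      calc γ 2 * γ 2 ≤ (144*M^2) * (144*M^2) := mul_le_mul hb2 hb2 hp2 (by positivity)
        _ = 20736 * M^4 := by ring
    have q31 : γ 3 * γ 1 ≤ 20786 * M^4 := by
      calc γ 3 * γ 1 ≤ (20786*M^3) * (1*M^1) := mul_le_mul hb3 hb1 hp1 (by positivity)
        _ = 20786 * M^4 := by ring
    have hmm := hMp 4 5 (by norm_num)
    have h144 : 144 * γ 4 ≤ 144 * (3007584 * M^4) := by linarith [hb4]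
    rw [hγ5]
    linarith [h144, hmm, q13, q22, q31]
  have hb6 : γ 6 ≤ 63413956224 * M^6 := by
    have q14 : γ 1 * γ 4 ≤ 3007584 * M^5 := by
      calc γ 1 * γ 4 ≤ (1*M^1) * (3007584*M^4) := mul_le_mul hb1 hb4 hp4 (by positivity)
        _ = 3007584 * M^5 := by ring
    have q23 : γ 2 * γ 3 ≤ 2993184 * M^5 := by
      calc γ 2 * γ 3 ≤ (144*M^2) * (20786*M^3) := mul_le_mul hb2 hb3 hp3 (by positivity)
        _ = 2993184 * M^5 := by ring
    have q32 : γ 3 * γ 2 ≤ 2993184 * M^5 := by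
      calc γ 3 * γ 2 ≤ (20786*M^3) * (144*M^2) := mul_le_mul hb3 hb2 hp2 (by positivity)
        _ = 2993184 * M^5 := by ring
    have q41 : γ 4 * γ 1 ≤ 3007584 * M^5 := by
      calc γ 4 * γ 1 ≤ (3007584*M^4) * (1*M^1) := mul_le_mul hb4 hb1 hp1 (by positivity)
        _ = 3007584 * M^5 := by ring
    have hmm := hMp 5 6 (by norm_num)
    have h144 : 144 * γ 5 ≤ 144 * (436207496 * M^5) := by linarith [hb5]
    rw [hγ6]
    linarith [h144, hmm, q14, q23, q32, q41]
  have hb7 : γ 7 ≤ 9240142545256 * M^7 := by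
    have q15 : γ 1 * γ 5 ≤ 436207496 * M^6 := by
      calc γ 1 * γ 5 ≤ (1*M^1) * (436207496*M^5) := mul_le_mul hb1 hb5 hp5 (by positivity)
        _ = 436207496 * M^6 := by ring
    have q24 : γ 2 * γ 4 ≤ 433092096 * M^6 := by
      calc γ 2 * γ 4 ≤ (144*M^2) * (3007584*M^4) := mul_le_mul hb2 hb4 hp4 (by positivity)
        _ = 433092096 * M^6 := by ring
    have q33 : γ 3 * γ 3 ≤ 432057796 * M^6 := by
      calc γ 3 * γ 3 ≤ (20786*M^3) * (20786*M^3) := mul_le_mul hb3 hb3 hp3 (by positivity)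
        _ = 432057796 * M^6 := by ring
    have q42 : γ 4 * γ 2 ≤ 433092096 * M^6 := by
      calc γ 4 * γ 2 ≤ (3007584*M^4) * (144*M^2) := mul_le_mul hb4 hb2 hp2 (by positivity)
        _ = 433092096 * M^6 := by ring
    have q51 : γ 5 * γ 1 ≤ 436207496 * M^6 := by
      calc γ 5 * γ 1 ≤ (436207496*M^5) * (1*M^1) := mul_le_mul hb5 hb1 hp1 (by positivity)
        _ = 436207496 * M^6 := by ring
    have hmm := hMp 6 7 (by norm_num)
    have h144 : 144 * γ 6 ≤ 144 * (63413956224 * M^6) := by linarith [hb6]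
    rw [hγ7]
    linarith [h144, hmm, q15, q24, q33, q42, q51]
  -- numeric base-case comparisons
  have hn1 : (1:ℝ) ≤ (1/50) * 200^1 * sfun 1 := by
    refine base_num le_rfl (u := 1) ?_ (by norm_num) (by norm_num)
    apply sqrt_le_of_sq (by norm_num); norm_num
  have hn2 : (144:ℝ) ≤ (1/50) * 200^2 * sfun 2 := by
    refine base_num (by norm_num) (u := 1.415) ?_ (by norm_num) (by norm_num)
    apply sqrt_le_of_sq (by norm_num); norm_num
  have hn3 : (20786:ℝ) ≤ (1/50) * 200^3 * sfun 3 := by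
    refine base_num (by norm_num) (u := 1.7321) ?_ (by norm_num) (by norm_num)
    apply sqrt_le_of_sq (by norm_num); norm_num
  have hn4 : (3007584:ℝ) ≤ (1/50) * 200^4 * sfun 4 := by
    refine base_num (by norm_num) (u := 2) ?_ (by norm_num) (by norm_num)
    apply sqrt_le_of_sq (by norm_num); norm_num
  have hn5 : (436207496:ℝ) ≤ (1/50) * 200^5 * sfun 5 := by
    refine base_num (by norm_num) (u := 2.2361) ?_ (by norm_num) (by norm_num)
    apply sqrt_le_of_sq (by norm_num); norm_num
  have hn6 : (63413956224:ℝ) ≤ (1/50) * 200^6 * sfun 6 := by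
    refine base_num (by norm_num) (u := 2.4495) ?_ (by norm_num) (by norm_num)
    apply sqrt_le_of_sq (by norm_num); norm_num
  have hn7 : (9240142545256:ℝ) ≤ (1/50) * 200^7 * sfun 7 := by
    refine base_num (by norm_num) (u := 2.6458) ?_ (by norm_num) (by norm_num)
    apply sqrt_le_of_sq (by norm_num); norm_num
  -- the main bound
  have hB : ∀ k, 1 ≤ k → γ k ≤ (1/50) * 200^k * M^k * sfun k := by
    have hbase : ∀ (k : ℕ) (d : ℝ), γ k ≤ d * M^k → d ≤ (1/50) * 200^k * sfun k →
        γ k ≤ (1/50) * 200^k * M^k * sfun k := by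
      intro k d hgd hd
      calc γ k ≤ d * M^k := hgd
        _ ≤ ((1/50) * 200^k * sfun k) * M^k := by
            exact mul_le_mul_of_nonneg_right hd (by positivity)
        _ = (1/50) * 200^k * M^k * sfun k := by ring
    intro k
    induction k using Nat.strong_induction_on with
    | _ k ih =>
      intro hk
      by_cases hk7 : k ≤ 7
      · interval_cases k
        · exact hbase 1 1 hb1 hn1
        · exact hbase 2 144 hb2 hn2
        · exact hbase 3 20786 hb3 hn3
        · exact hbase 4 3007584 hb4 hn4
        · exact hbase 5 436207496 hb5 hn5
        · exact hbase 6 63413956224 hb6 hn6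
        · exact hbase 7 9240142545256 hb7 hn7
      · -- k = m+1 with m ≥ 7
        obtain ⟨m, rfl⟩ : ∃ m, k = m + 1 := ⟨k - 1, by omega⟩
        have hm7 : 7 ≤ m := by omega
        have hm1 : 1 ≤ m := by omega
        rw [hrec m hm1]
        have ihm := ih m (by omega) hm1
        have hsm := sfun_pos hm1
        have hsum : ∑ l ∈ Finset.Icc 1 (m-1), γ l * γ (m-l)
            ≤ (1/2500) * 200^m * M^m * (17 * sfun m) := by
          have step1 : ∑ l ∈ Finset.Icc 1 (m-1), γ l * γ (m-l)
              ≤ ∑ l ∈ Finset.Icc 1 (m-1), (1/2500) * 200^m * M^m * (sfun l * sfun (m-l)) := by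
            apply Finset.sum_le_sum
            intro l hl
            rw [Finset.mem_Icc] at hl
            have hl1 : 1 ≤ l := hl.1
            have hl2 : 1 ≤ m - l := by omega
            have e1 := ih l (by omega) hl1
            have e2 := ih (m-l) (by omega) hl2
            have hprod : γ l * γ (m-l)
                ≤ ((1/50) * 200^l * M^l * sfun l) * ((1/50) * 200^(m-l) * M^(m-l) * sfun (m-l)) :=
              mul_le_mul e1 e2 (hpos (m-l) hl2).le
                (mul_nonneg (by positivity) (sfun_pos hl1).le)
            have hpow : (200:ℝ)^l * 200^(m-l) = 200^m ∧ M^l * M^(m-l) = M^m := by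
              constructor <;> rw [← pow_add, Nat.add_sub_cancel' (by omega : l ≤ m)]
            calc γ l * γ (m-l) ≤ _ := hprod
              _ = (1/2500) * (200^l * 200^(m-l)) * (M^l * M^(m-l)) * (sfun l * sfun (m-l)) := by
                  ring
              _ = (1/2500) * 200^m * M^m * (sfun l * sfun (m-l)) := by
                  rw [hpow.1, hpow.2]
          have step2 : ∑ l ∈ Finset.Icc 1 (m-1), (1/2500) * 200^m * M^m * (sfun l * sfun (m-l))
              = (1/2500) * 200^m * M^m * ∑ l ∈ Finset.Icc 1 (m-1), sfun l * sfun (m-l) := by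
            rw [Finset.mul_sum]
          calc ∑ l ∈ Finset.Icc 1 (m-1), γ l * γ (m-l)
              ≤ (1/2500) * 200^m * M^m * ∑ l ∈ Finset.Icc 1 (m-1), sfun l * sfun (m-l) := by
                rw [← step2]; exact step1
            _ ≤ (1/2500) * 200^m * M^m * (17 * sfun m) := by
                exact mul_le_mul_of_nonneg_left (conv_sum (by omega)) (by positivity)
        have hstep := sfun_step hm7
        have hsm1 := sfun_pos (k := m+1) (by omega)
        calc 144 * γ m + 50 * ∑ l ∈ Finset.Icc 1 (m-1), γ l * γ (m-l)
            ≤ 144 * ((1/50) * 200^m * M^m * sfun m)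
              + 50 * ((1/2500) * 200^m * M^m * (17 * sfun m)) := by
              have := mul_le_mul_of_nonneg_left ihm (by norm_num : (0:ℝ) ≤ 144)
              have := mul_le_mul_of_nonneg_left hsum (by norm_num : (0:ℝ) ≤ 50)
              linarith
          _ = (1/50) * 200^m * M^m * (161 * sfun m) := by ring
          _ ≤ (1/50) * 200^m * M^m * (200 * sfun (m+1)) := by
              exact mul_le_mul_of_nonneg_left hstep (by positivity)
          _ ≤ (1/50) * 200^(m+1) * M^(m+1) * sfun (m+1) := by
              have : (1/50) * (200:ℝ)^m * M^m * (200 * sfun (m+1)) * 1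
                  ≤ (1/50) * 200^m * M^m * (200 * sfun (m+1)) * M :=
                mul_le_mul_of_nonneg_left hM1 (by positivity)
              calc (1/50) * (200:ℝ)^m * M^m * (200 * sfun (m+1))
                  ≤ (1/50) * 200^m * M^m * (200 * sfun (m+1)) * M := by linarith
                _ = (1/50) * 200^(m+1) * M^(m+1) * sfun (m+1) := by ring
  constructor
  · refine ⟨1/50, by norm_num, fun k hk => ?_⟩
    rw [rpow_eq_sfun hk]
    calc γ k ≤ (1/50) * 200^k * M^k * sfun k := hB k hk
      _ = 1/50 * 200^k * sfun k * M^k := by ring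
  · intro x hx
    have hr0 : (0:ℝ) ≤ 200 * M * |x| := by positivity
    have hr1 : 200 * M * |x| < 1 := by
      have h200 : (0:ℝ) < 200 * M := by positivity
      calc 200 * M * |x| < 200 * M * (1 / (200 * M)) := by
            exact mul_lt_mul_of_pos_left hx h200
        _ = 1 := by field_simp
    set r : ℝ := 200 * M * |x| with hrdef
    have hgeo : Summable (fun n : ℕ => (1/50) * r^(n+1)) := by
      have h0 : Summable (fun n : ℕ => r^n) := summable_geometric_of_lt_one hr0 hr1
      have h1 : Summable (fun n : ℕ => r * r^n) := h0.mul_left r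
      have h2 : Summable (fun n : ℕ => (1/50) * (r * r^n)) := h1.mul_left (1/50)
      convert h2 using 2 with n
      ring
    rw [← summable_nat_add_iff 1]
    apply Summable.of_nonneg_of_le (fun n => abs_nonneg _) _ hgeo
    intro n
    have hk1 : 1 ≤ n + 1 := by omega
    have habs : |γ (n+1) * x^(n+1)| = γ (n+1) * |x|^(n+1) := by
      rw [abs_mul, abs_pow, abs_of_pos (hpos (n+1) hk1)]
    rw [habs]
    have hBb := hB (n+1) hk1
    have hxp : (0:ℝ) ≤ |x|^(n+1) := by positivity
    calc γ (n+1) * |x|^(n+1) ≤ ((1/50) * 200^(n+1) * M^(n+1) * sfun (n+1)) * |x|^(n+1) :=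
          mul_le_mul_of_nonneg_right hBb hxp
      _ ≤ ((1/50) * 200^(n+1) * M^(n+1) * 1) * |x|^(n+1) := by
          have h' : (0:ℝ) ≤ (1/50) * 200^(n+1) * M^(n+1) := by positivity
          exact mul_le_mul_of_nonneg_right
            (mul_le_mul_of_nonneg_left (sfun_le_one hk1) h') hxp
      _ = (1/50) * r^(n+1) := by
          rw [hrdef, mul_pow, mul_pow]
          ring
end
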